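/- For n ≥ 3 with n ≡ 0 (mod 4), the cycle C_n has a color-blind distinguishing 2-edge-coloring. -/

import Mathlib

open Finset

/-- The color-blind partition of `v`: the multiset of (nonzero) counts of incident
edges of each color, i.e. the partition of `deg v` with trailing zeroes removed. -/
def cbp {V : Type*} [Fintype V] [DecidableEq V] (G : SimpleGraph V) [DecidableRel G.Adj]
    {k : ℕ} (c : Sym2 V → Fin k) (v : V) : Multiset ℕ :=
  (((Finset.univ : Finset (Fin k)).val.map fun i =>
    ((G.neighborFinset v).filter fun w => c s(v, w) = i).card).filter fun m => m ≠ 0)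

/-- `c` is a color-blind distinguishing edge-coloring of `G`. -/
def IsCBD {V : Type*} [Fintype V] [DecidableEq V] (G : SimpleGraph V) [DecidableRel G.Adj]
    {k : ℕ} (c : Sym2 V → Fin k) : Prop :=
  ∀ u v : V, G.Adj u v → cbp G c u ≠ cbp G c v

/-- The cycle `C_n` on vertex set `Fin n` (for `n ≥ 3`). -/
def cycleGraph (n : ℕ) : SimpleGraph (Fin n) where
  Adj p q := p ≠ q ∧ ((p.val + 1) % n = q.val ∨ (q.val + 1) % n = p.val)
  symm := ⟨fun p q h => ⟨h.1.symm, h.2.symm⟩⟩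
  loopless := ⟨fun p h => h.1 rfl⟩

instance (n : ℕ) : DecidableRel (cycleGraph n).Adj := fun p q =>
  inferInstanceAs (Decidable (p ≠ q ∧ ((p.val + 1) % n = q.val ∨ (q.val + 1) % n = p.val)))

/-!
Colour the edges `{i, i + 1}` of `C_n` with the periodic pattern `0, 0, 1, 1, 0, 0, 1, 1, …`,
which closes up because `4 ∣ n`: an edge gets colour `1` iff it has an endpoint `≡ 3 (mod 4)`.
The two edges at a vertex `i` then have the same colour exactly when `i` is odd, so odd vertices
have colour-blind partition `(2)` and even ones `(1, 1)`; adjacent vertices of an even cycle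
have different parities.
-/

theorem cbp_of_neighborFinset_eq_pair {V : Type*} [Fintype V] [DecidableEq V]
    (G : SimpleGraph V) [DecidableRel G.Adj] {k : ℕ} (c : Sym2 V → Fin k) {v x y : V}
    (hxy : x ≠ y) (hN : G.neighborFinset v = {x, y}) :
    cbp G c v = if c s(v, x) = c s(v, y) then {2} else {1, 1} := by
  set count : Fin k → ℕ := fun i =>
    (if c s(v, x) = i then 1 else 0) + (if c s(v, y) = i then 1 else 0)
  have hcount : ∀ i, ((G.neighborFinset v).filter fun w => c s(v, w) = i).card = count i := by
    intro i
    rw [hN, filter_insert, filter_singleton]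
    split_ifs <;> simp [count, *]
  have hsupp : (univ.filter fun i => count i ≠ 0) = {c s(v, x), c s(v, y)} := by
    ext i
    simp only [count, mem_filter, mem_univ, true_and, mem_insert, mem_singleton]
    split_ifs <;> grind
  unfold cbp
  simp only [hcount, Multiset.filter_map, Function.comp_def, ← filter_val, hsupp]
  split_ifs with h
  · simp [count, h]
  · rw [insert_val_of_notMem (mem_singleton.not.mpr h)]
    simp [count, h, Ne.symm h]

namespace Fin

variable {n : ℕ} [NeZero n]

theorem val_add_one_mod_of_dvd {d : ℕ} (hd : d ∣ n) (v : Fin n) :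
    (v + 1).val % d = (v.val + 1) % d := by
  rw [val_add, val_one', Nat.add_mod_mod, Nat.mod_mod_of_dvd _ hd]

theorem add_one_ne_self (hn : 2 ≤ n) (v : Fin n) : v + 1 ≠ v := by
  rw [Ne, add_eq_left, Fin.ext_iff, val_one', Nat.mod_eq_of_lt hn]
  exact one_ne_zero

theorem add_one_ne_sub_one (hn : 3 ≤ n) (v : Fin n) : v + 1 ≠ v - 1 := by
  intro h
  have h2 : (1 : Fin n) + 1 = 0 := by
    rw [← sub_eq_zero.mpr h]
    abel
  rw [Fin.ext_iff, val_add, val_one', Nat.mod_eq_of_lt (by omega : 1 < n)] at h2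
  simp [Nat.mod_eq_of_lt (by omega : 2 < n)] at h2

end Fin

def cycleColoring (n : ℕ) : Sym2 (Fin n) → Fin 2 :=
  Sym2.lift ⟨fun u v => if u.val % 4 = 3 ∨ v.val % 4 = 3 then 1 else 0,
    fun _ _ => if_congr or_comm rfl rfl⟩

section CycleGraph

variable {n : ℕ} [NeZero n]

theorem cycleGraph_adj_iff {p q : Fin n} :
    (cycleGraph n).Adj p q ↔ p ≠ q ∧ (q = p + 1 ∨ p = q + 1) := by
  simp only [cycleGraph, Fin.ext_iff, Fin.val_add, Fin.val_one', Nat.add_mod_mod, eq_comm]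

theorem cycleGraph_neighborFinset (hn : 3 ≤ n) (v : Fin n) :
    (cycleGraph n).neighborFinset v = {v + 1, v - 1} := by
  ext w
  rw [SimpleGraph.mem_neighborFinset, cycleGraph_adj_iff, mem_insert, mem_singleton,
    eq_sub_iff_add_eq]
  constructor
  · rintro ⟨-, h | h⟩
    exacts [Or.inl h, Or.inr h.symm]
  · rintro (rfl | rfl)
    · exact ⟨(Fin.add_one_ne_self (by omega) v).symm, Or.inl rfl⟩
    · exact ⟨Fin.add_one_ne_self (by omega) w, Or.inr rfl⟩

theorem val_mod_two_ne_of_cycleGraph_adj (h2 : 2 ∣ n) {u v : Fin n}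
    (huv : (cycleGraph n).Adj u v) : u.val % 2 ≠ v.val % 2 := by
  obtain ⟨-, rfl | rfl⟩ := cycleGraph_adj_iff.mp huv
  · have := Fin.val_add_one_mod_of_dvd h2 u
    omega
  · have := Fin.val_add_one_mod_of_dvd h2 v
    omega

theorem cycleColoring_add_one_eq_sub_one_iff (h4 : 4 ∣ n) (v : Fin n) :
    cycleColoring n s(v, v + 1) = cycleColoring n s(v, v - 1) ↔ v.val % 2 = 1 := by
  have hsucc := Fin.val_add_one_mod_of_dvd h4 v
  have hpred := Fin.val_add_one_mod_of_dvd h4 (v - 1)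
  rw [sub_add_cancel] at hpred
  simp only [cycleColoring, Sym2.lift_mk]
  split_ifs <;> simp only [true_iff, false_iff, one_ne_zero, zero_ne_one] <;> omega

theorem cbp_cycleColoring (h3 : 3 ≤ n) (h4 : 4 ∣ n) (v : Fin n) :
    cbp (cycleGraph n) (cycleColoring n) v = if v.val % 2 = 1 then {2} else {1, 1} := by
  rw [cbp_of_neighborFinset_eq_pair _ _ (Fin.add_one_ne_sub_one h3 v)
    (cycleGraph_neighborFinset h3 v)]
  exact if_congr (cycleColoring_add_one_eq_sub_one_iff h4 v) rfl rfl

end CycleGraph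

theorem cycle_four_dvd_dal_le_two (n : ℕ) (h3 : 3 ≤ n) (h4 : n % 4 = 0) :
    ∃ c : Sym2 (Fin n) → Fin 2, IsCBD (cycleGraph n) c := by
  have : NeZero n := ⟨by omega⟩
  have hdvd : 4 ∣ n := Nat.dvd_of_mod_eq_zero h4
  refine ⟨cycleColoring n, fun u v huv => ?_⟩
  have hpar := val_mod_two_ne_of_cycleGraph_adj (dvd_trans (by norm_num) hdvd) huv
  rw [cbp_cycleColoring h3 hdvd, cbp_cycleColoring h3 hdvd]
  split_ifs <;> first | omega | decide
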